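/- A distal homeomorphism of a compact connected metric space with more than one point has no shadowable points. -/

import Mathlib

open Metric Set

/-- Natural iterates of a homeomorphism. -/
def hnpow {X : Type*} [TopologicalSpace X] (f : X ≃ₜ X) : ℕ → X ≃ₜ X
  | 0 => Homeomorph.refl X
  | n+1 => (hnpow f n).trans f

/-- Integer iterates `fⁿ`, `n ∈ ℤ`, of a homeomorphism. -/
def hpow {X : Type*} [TopologicalSpace X] (f : X ≃ₜ X) : ℤ → X ≃ₜ X
  | Int.ofNat n => hnpow f n
  | Int.negSucc n => hnpow f.symm (n+1)

variable {X : Type*} [MetricSpace X]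

/-- `ξ` is a `δ`-pseudo-orbit of `f`. -/
def IsPseudoOrbit (f : X ≃ₜ X) (δ : ℝ) (ξ : ℤ → X) : Prop :=
  ∀ n : ℤ, dist (f (ξ n)) (ξ (n+1)) ≤ δ

/-- `ξ` is `ε`-shadowed by the orbit of `y`. -/
def ShadowedBy (f : X ≃ₜ X) (ε : ℝ) (y : X) (ξ : ℤ → X) : Prop :=
  ∀ n : ℤ, dist (hpow f n y) (ξ n) ≤ ε

/-- `x` is a shadowable point of `f`. -/
def ShadowablePoint (f : X ≃ₜ X) (x : X) : Prop :=
  ∀ ε > 0, ∃ δ > 0, ∀ ξ : ℤ → X, IsPseudoOrbit f δ ξ → ξ 0 = x →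
    ∃ y, ShadowedBy f ε y ξ

/-- `f` has the pseudo-orbit tracing property. -/
def POTP (f : X ≃ₜ X) : Prop :=
  ∀ ε > 0, ∃ δ > 0, ∀ ξ : ℤ → X, IsPseudoOrbit f δ ξ → ∃ y, ShadowedBy f ε y ξ

/-- `x` is a nonwandering point of `f`. -/
def NonWandering (f : X ≃ₜ X) (x : X) : Prop :=
  ∀ U ∈ nhds x, ∃ k : ℕ, 0 < k ∧ ((hpow f (k : ℤ)) '' U ∩ U).Nonempty

/-- `x` is a chain recurrent point of `f`. -/
def ChainRecurrent (f : X ≃ₜ X) (x : X) : Prop :=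
  ∀ ρ > 0, ∃ n : ℕ, 0 < n ∧ ∃ c : ℕ → X, c 0 = x ∧ c n = x ∧
    ∀ i < n, dist (f (c i)) (c (i+1)) ≤ ρ

/-- `f` is distal: `inf_{n∈ℤ} d(fⁿ x, fⁿ y) > 0` for all distinct `x, y`. -/
def Distal (f : X ≃ₜ X) : Prop :=
  ∀ x y : X, x ≠ y → ∃ c > 0, ∀ n : ℤ, c ≤ dist (hpow f n x) (hpow f n y)

/-- `f` is minimal: every full orbit is dense. -/
def MinimalHomeo (f : X ≃ₜ X) : Prop :=
  ∀ x : X, Dense (Set.range fun n : ℤ => hpow f n x)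

/-- `f` is equicontinuous (uniformly, over all integer iterates). -/
def EquicontinuousHomeo (f : X ≃ₜ X) : Prop :=
  ∀ α > 0, ∃ β > 0, ∀ x y : X, dist x y ≤ β → ∀ n : ℤ, dist (hpow f n x) (hpow f n y) ≤ α

/-!
Distal maps are pointwise recurrent: an idempotent in the closure of the iterates (Ellis) must
be the identity. On a connected space this makes every pair of points joinable by `δ`-chains of
all sufficiently large lengths, because the residue of chain lengths modulo the gcd of the loop
lengths is locally constant. Shadowing such chains through the shadowable point shows that `f`
is topologically mixing, so for every `ε` the pairs that come `ε`-close at some time are dense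
in `X × X`. By Baire the proximal pairs are dense; for a distal map they form the diagonal,
which is closed and proper.
-/

open Function

section Iterates

theorem hnpow_eq_pow (f : X ≃ₜ X) : ∀ n : ℕ, hnpow f n = f ^ n
  | 0 => rfl
  | n + 1 => by rw [pow_succ', ← hnpow_eq_pow f n]; rfl

theorem hpow_eq_zpow (f : X ≃ₜ X) : ∀ n : ℤ, hpow f n = f ^ n
  | Int.ofNat n => hnpow_eq_pow f n
  | Int.negSucc n => by rw [hpow, hnpow_eq_pow, zpow_negSucc, ← inv_pow]; rfl

@[simp]
theorem hpow_zero_apply (f : X ≃ₜ X) (x : X) : hpow f 0 x = x := rfl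

theorem hpow_natCast_apply (f : X ≃ₜ X) (n : ℕ) (x : X) : hpow f n x = f^[n] x := by
  induction n with
  | zero => rfl
  | succ n ih => exact (congrArg f ih).trans (iterate_succ_apply' f n x).symm

theorem hpow_add_apply (f : X ≃ₜ X) (m n : ℤ) (x : X) :
    hpow f (m + n) x = hpow f m (hpow f n x) := by
  simp only [hpow_eq_zpow, zpow_add, Homeomorph.mul_apply]

theorem hpow_add_one_apply (f : X ≃ₜ X) (n : ℤ) (x : X) : hpow f (n + 1) x = f (hpow f n x) := by
  rw [add_comm, hpow_add_apply]; rfl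

end Iterates

section Recurrence

def PointwiseRecurrent (g : X → X) : Prop :=
  ∀ x : X, ∀ η > 0, ∃ n : ℕ, dist (g^[n + 1] x) x < η

theorem exists_idempotent_mem_closure_iterates {Y : Type*} [TopologicalSpace Y] [CompactSpace Y]
    [T2Space Y] {g : Y → Y} (hg : Continuous g) :
    ∃ u ∈ closure (range fun n : ℕ => g^[n + 1]), u ∘ u = u := by
  set S := range fun n : ℕ => g^[n + 1]
  have hS : ∀ a ∈ S, ∀ b ∈ S, a ∘ b ∈ S := by
    rintro _ ⟨m, rfl⟩ _ ⟨n, rfl⟩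
    exact ⟨m + n + 1, by
      show g^[m + n + 1 + 1] = g^[m + 1] ∘ g^[n + 1]
      rw [← iterate_add]; congr 1; omega⟩
  have hS_left : ∀ a ∈ S, ∀ b ∈ closure S, a ∘ b ∈ closure S := by
    rintro _ ⟨m, rfl⟩ b hb
    exact map_mem_closure (continuous_pi fun y => (hg.iterate _).comp (continuous_apply y)) hb
      (hS _ ⟨m, rfl⟩)
  have hS_closure : ∀ a ∈ closure S, ∀ b ∈ closure S, a ∘ b ∈ closure S := fun a ha b hb =>
    closure_closure (s := S) ▸ map_mem_closure (f := (· ∘ b))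
      (continuous_pi fun y => continuous_apply (b y)) ha fun a' ha' => hS_left a' ha' b hb
  let _ : TopologicalSpace (Function.End Y) := inferInstanceAs (TopologicalSpace (Y → Y))
  have : T2Space (Function.End Y) := inferInstanceAs (T2Space (Y → Y))
  exact exists_idempotent_in_compact_subsemigroup (M := Function.End Y)
    (fun r => continuous_pi fun y => continuous_apply (r y)) (closure S)
    ⟨g, subset_closure ⟨0, rfl⟩⟩ (isClosed_closure (X := Y → Y)).isCompact hS_closure

variable [CompactSpace X] {f : X ≃ₜ X}

theorem Distal.id_mem_closure_iterates (hd : Distal f) :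
    id ∈ closure (range fun n : ℕ => (⇑f)^[n + 1]) := by
  obtain ⟨u, hu, huu⟩ := exists_idempotent_mem_closure_iterates f.continuous
  suffices u = id from this ▸ hu
  funext p
  by_contra hne
  obtain ⟨c, hc, hsep⟩ := hd p (u p) (Ne.symm hne)
  -- `u` maps both `p` and `u p` to `u p`, so an iterate of `f` close to `u` brings them within `c`.
  set O : Set (X → X) :=
    (fun g => g p) ⁻¹' ball (u p) (c / 2) ∩ (fun g => g (u p)) ⁻¹' ball (u p) (c / 2)
  have hO : IsOpen O := (isOpen_ball.preimage (continuous_apply p)).inter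
    (isOpen_ball.preimage (continuous_apply (u p)))
  have huO : u ∈ O := by
    refine ⟨mem_ball_self (half_pos hc), ?_⟩
    show u (u p) ∈ ball (u p) (c / 2)
    rw [show u (u p) = u p from congrFun huu p]
    exact mem_ball_self (half_pos hc)
  obtain ⟨_, ⟨h₁, h₂⟩, n, rfl⟩ := mem_closure_iff_nhds.mp hu O (hO.mem_nhds huO)
  have := hsep (n + 1 : ℕ)
  rw [hpow_natCast_apply, hpow_natCast_apply] at this
  linarith [dist_triangle_right ((⇑f)^[n + 1] p) ((⇑f)^[n + 1] (u p)) (u p), mem_ball.mp h₁,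
    mem_ball.mp h₂]

theorem Distal.pointwiseRecurrent (hd : Distal f) : PointwiseRecurrent (⇑f) := by
  intro x η hη
  obtain ⟨_, hg, n, rfl⟩ := mem_closure_iff_nhds.mp hd.id_mem_closure_iterates _
    ((isOpen_ball.preimage (continuous_apply x)).mem_nhds (mem_ball_self hη))
  exact ⟨n, hg⟩

end Recurrence

inductive DeltaChain (g : X → X) (δ : ℝ) : ℕ → X → X → Prop
  | refl (a : X) : DeltaChain g δ 0 a a
  | cons {n : ℕ} {a b c : X} : dist (g a) b ≤ δ → DeltaChain g δ n b c → DeltaChain g δ (n + 1) a c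

namespace DeltaChain

variable {g : X → X} {δ η : ℝ} {m n : ℕ} {a b c : X}

theorem mono (h : DeltaChain g δ n a b) (hδη : δ ≤ η) : DeltaChain g η n a b := by
  induction h with
  | refl a => exact refl a
  | cons hab _ ih => exact cons (hab.trans hδη) ih

theorem trans (h₁ : DeltaChain g δ m a b) (h₂ : DeltaChain g δ n b c) :
    DeltaChain g δ (m + n) a c := by
  induction h₁ with
  | refl => simpa using h₂
  | cons hab _ ih => rw [Nat.add_right_comm]; exact cons hab (ih h₂)

theorem of_dist_iterate_le (hδ : 0 ≤ δ) : ∀ {n : ℕ} {a : X},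
    dist (g^[n + 1] a) b ≤ δ → DeltaChain g δ (n + 1) a b
  | 0, _, h => cons h (refl b)
  | n + 1, a, h => cons (by rwa [dist_self]) (of_dist_iterate_le hδ (n := n) (a := g a)
      (by rwa [iterate_succ_apply] at h))

theorem replace_start (h : DeltaChain g δ (n + 1) a c) (hb : dist (g b) (g a) ≤ η) :
    DeltaChain g (δ + η) (n + 1) b c := by
  rcases h with _ | ⟨ha, hc⟩
  have hη : 0 ≤ η := dist_nonneg.trans hb
  exact cons ((dist_triangle _ (g a) _).trans (by linarith)) (hc.mono (by linarith))

end DeltaChain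

section ChainMixing

def ChainMixing (g : X → X) : Prop :=
  ∀ δ > 0, ∀ a b : X, ∃ N, ∀ n ≥ N, DeltaChain g δ n a b

def loopLengths (g : X → X) (δ : ℝ) (a : X) : AddSubmonoid ℕ where
  carrier := {n | DeltaChain g δ n a a}
  zero_mem' := DeltaChain.refl a
  add_mem' h₁ h₂ := DeltaChain.trans h₁ h₂

variable [ConnectedSpace X] {g : X → X} {δ : ℝ}

theorem PointwiseRecurrent.exists_deltaChain (hrec : PointwiseRecurrent g) (hg : Continuous g)
    (hδ : 0 < δ) (a b : X) : ∃ n, DeltaChain g δ (n + 1) a b := by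
  set R := {y | ∃ n, DeltaChain g δ (n + 1) a y}
  -- Enter a recurrent orbit near `z` from a nearby point of `R`, and leave it towards `w`.
  have hball : ∀ z ∈ closure R, ball z (δ / 4) ⊆ R := by
    intro z hz w hw
    obtain ⟨γ, hγ, hγz⟩ := Metric.continuous_iff.mp hg z (δ / 2) (half_pos hδ)
    obtain ⟨r, ⟨n, hn⟩, hzr⟩ := Metric.mem_closure_iff.mp hz γ hγ
    obtain ⟨k, hk⟩ := hrec z (δ / 4) (by positivity)
    have hzw : DeltaChain g (δ / 2) (k + 1) z w := .of_dist_iterate_le (by positivity) <| by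
      linarith [dist_triangle (g^[k + 1] z) z w, mem_ball'.mp hw]
    have hrw := hzw.replace_start (hγz r (by rwa [dist_comm])).le
    exact ⟨n + 1 + k, hn.trans (by rwa [add_halves] at hrw)⟩
  have hR : IsClopen R :=
    ⟨isClosed_of_closure_subset fun z hz => hball z hz (mem_ball_self (by positivity)),
      isOpen_iff.mpr fun z hz => ⟨δ / 4, by positivity, hball z (subset_closure hz)⟩⟩
  have hR_univ : R = univ :=
    hR.eq_univ ⟨g a, 0, .of_dist_iterate_le hδ.le (by simpa using hδ.le)⟩
  exact (hR_univ.symm ▸ mem_univ b : b ∈ R)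

theorem PointwiseRecurrent.setGcd_loopLengths (hrec : PointwiseRecurrent g) (hg : Continuous g)
    (hδ : 0 < δ) (a : X) : Nat.setGcd (loopLengths g δ a) = 1 := by
  set d := Nat.setGcd (loopLengths g δ a)
  have hdvd_iff : ∀ {w n₁ n₂}, DeltaChain g δ n₁ w a → DeltaChain g δ n₂ w a →
      (d ∣ n₁ ↔ d ∣ n₂) := by
    intro w n₁ n₂ h₁ h₂
    obtain ⟨m, hm⟩ := hrec.exists_deltaChain hg hδ a w
    have e₁ : d ∣ m + 1 + n₁ := Nat.setGcd_dvd_of_mem (hm.trans h₁)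
    have e₂ : d ∣ m + 1 + n₂ := Nat.setGcd_dvd_of_mem (hm.trans h₂)
    exact ⟨fun h => (Nat.dvd_add_right ((Nat.dvd_add_left h).mp e₁)).mp e₂,
      fun h => (Nat.dvd_add_right ((Nat.dvd_add_left h).mp e₂)).mp e₁⟩
  -- The residue modulo `d` of the lengths of chains back to `a` is locally constant.
  set φ : X → Prop := fun w => ∃ n, DeltaChain g δ n w a ∧ d ∣ n
  have hφ_iff : ∀ {w n}, DeltaChain g δ n w a → (φ w ↔ d ∣ n) := fun hn =>
    ⟨fun ⟨_, hn', hd⟩ => (hdvd_iff hn' hn).mp hd, fun hd => ⟨_, hn, hd⟩⟩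
  have hφ : IsLocallyConstant φ := by
    refine (IsLocallyConstant.iff_eventually_eq φ).mpr fun w => ?_
    obtain ⟨n, hn⟩ := hrec.exists_deltaChain hg (half_pos hδ) w a
    filter_upwards [(hg.tendsto w).eventually (ball_mem_nhds (g w) (half_pos hδ))] with w' hw'
    have hn' := hn.replace_start (mem_ball.mp hw').le
    rw [add_halves] at hn'
    exact propext ((hφ_iff hn').trans (hφ_iff (hn.mono (half_le_self hδ.le))).symm)
  obtain ⟨n, hn, hdn⟩ : φ (g a) :=
    hφ.apply_eq_of_preconnectedSpace a (g a) ▸ ⟨0, .refl a, dvd_zero d⟩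
  have hloop : d ∣ n + 1 :=
    Nat.setGcd_dvd_of_mem (show n + 1 ∈ loopLengths g δ a from .cons (by simpa using hδ.le) hn)
  exact Nat.dvd_one.mp ((Nat.dvd_add_right hdn).mp hloop)

theorem PointwiseRecurrent.chainMixing (hrec : PointwiseRecurrent g) (hg : Continuous g) :
    ChainMixing g := by
  intro δ hδ a b
  obtain ⟨N, hN⟩ := Nat.exists_mem_closure_of_ge (loopLengths g δ a : Set ℕ)
  obtain ⟨s, hs⟩ := hrec.exists_deltaChain hg hδ a b
  refine ⟨N + (s + 1), fun n hn => ?_⟩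
  have hloop : DeltaChain g δ (n - (s + 1)) a a := by
    have := hN (n - (s + 1)) (by omega) (by rw [hrec.setGcd_loopLengths hg hδ]; exact one_dvd _)
    rwa [AddSubmonoid.closure_eq] at this
  have := hloop.trans hs
  rwa [Nat.sub_add_cancel (by omega)] at this

end ChainMixing

section Shadowing

variable {f : X ≃ₜ X} {δ : ℝ}

theorem isPseudoOrbit_hpow (hδ : 0 ≤ δ) (x : X) (s : ℤ) :
    IsPseudoOrbit f δ fun t => hpow f (t + s) x := by
  intro t
  show dist (f (hpow f (t + s) x)) (hpow f (t + 1 + s) x) ≤ δ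
  rw [add_right_comm, hpow_add_one_apply, dist_self]
  exact hδ

theorem IsPseudoOrbit.splice {ξ : ℤ → X} (hξ : IsPseudoOrbit f δ ξ) (k : ℤ) {y : X}
    (hy : dist (f (ξ k)) y ≤ δ) :
    IsPseudoOrbit f δ fun t => if t ≤ k then ξ t else hpow f (t - (k + 1)) y := by
  intro t
  rcases lt_trichotomy t k with htk | rfl | htk
  · simp only [if_pos htk.le, if_pos (show t + 1 ≤ k by omega)]
    exact hξ t
  · simp only [le_refl, if_true, if_neg (show ¬t + 1 ≤ t by omega), sub_self]
    exact hy
  · simp only [if_neg (show ¬t ≤ k by omega), if_neg (show ¬t + 1 ≤ k by omega),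
      show t + 1 - (k + 1) = t - (k + 1) + 1 by ring, hpow_add_one_apply, dist_self]
    exact dist_nonneg.trans hy

theorem IsPseudoOrbit.exists_extend_deltaChain {n : ℕ} {a b : X} (hc : DeltaChain f δ n a b) :
    ∀ {ξ : ℤ → X}, IsPseudoOrbit f δ ξ → ∀ k : ℤ, ξ k = a →
      ∃ η : ℤ → X, IsPseudoOrbit f δ η ∧ (∀ t ≤ k, η t = ξ t) ∧ η (k + n) = b := by
  induction hc with
  | refl a => exact fun hξ k hk => ⟨_, hξ, fun _ _ => rfl, by simpa using hk⟩
  | cons hab _ ih =>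
    intro ξ hξ k hk
    obtain ⟨η, hη, hηξ, hηb⟩ := ih (hξ.splice k (hk ▸ hab)) (k + 1) (by simp)
    refine ⟨η, hη, fun t ht => by rw [hηξ t (by omega), if_pos ht], ?_⟩
    rw [← hηb]; congr 1; push_cast; ring

/-- Topological mixing, stated with balls. -/
def IsMixing (g : X → X) : Prop :=
  ∀ u v : X, ∀ ρ > 0, ∃ N, ∀ n ≥ N, ∃ w, dist w u ≤ ρ ∧ dist (g^[n] w) v ≤ ρ

/-- Chains `u ⇝ x₀ ⇝ v` through the shadowable point `x₀` are shadowed by true orbits. -/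
theorem ShadowablePoint.isMixing {x₀ : X} (hx : ShadowablePoint f x₀) (hcm : ChainMixing (⇑f)) :
    IsMixing (⇑f) := by
  intro u v ρ hρ
  obtain ⟨δ, hδ, hshadow⟩ := hx ρ hρ
  obtain ⟨s, hs⟩ := hcm δ hδ u x₀
  obtain ⟨M, hM⟩ := hcm δ hδ x₀ v
  refine ⟨s + M, fun n hn => ?_⟩
  obtain ⟨m, rfl⟩ : ∃ m, n = s + m := ⟨n - s, by omega⟩
  obtain ⟨η₁, hη₁, hη₁u, hη₁x₀⟩ := (isPseudoOrbit_hpow hδ.le u s).exists_extend_deltaChain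
    (hs s le_rfl) (-s) (by simp)
  obtain ⟨η₂, hη₂, hη₂η₁, hη₂v⟩ := hη₁.exists_extend_deltaChain (hM m (by omega)) 0
    (by simpa using hη₁x₀)
  have hη₂u : η₂ (-s) = u := by rw [hη₂η₁ _ (by omega), hη₁u _ le_rfl]; simp
  obtain ⟨y, hy⟩ := hshadow η₂ hη₂ (by simpa [hη₂η₁ 0 le_rfl] using hη₁x₀)
  refine ⟨hpow f (-s) y, by simpa [hη₂u] using hy (-s), ?_⟩
  rw [← hpow_natCast_apply, ← hpow_add_apply, show ((s + m : ℕ) : ℤ) + -s = m by push_cast; ring]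
  rw [zero_add] at hη₂v
  simpa [hη₂v] using hy m

end Shadowing

section Proximal

theorem IsMixing.dense_setOf_dist_iterate_lt {g : X → X} (hmix : IsMixing g) {ε : ℝ}
    (hε : 0 < ε) : Dense {p : X × X | ∃ n : ℕ, dist (g^[n] p.1) (g^[n] p.2) < ε} := by
  rw [Metric.dense_iff]
  rintro ⟨u, v⟩ r hr
  have hρ : 0 < min (r / 2) (ε / 3) := by positivity
  -- send a point near `u` and a point near `v` close to `u` at the same time
  obtain ⟨N₁, h₁⟩ := hmix u u _ hρ
  obtain ⟨N₂, h₂⟩ := hmix v u _ hρ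
  obtain ⟨w₁, hw₁, hw₁'⟩ := h₁ (max N₁ N₂) (le_max_left _ _)
  obtain ⟨w₂, hw₂, hw₂'⟩ := h₂ (max N₁ N₂) (le_max_right _ _)
  have hr' := min_le_left (r / 2) (ε / 3)
  have hε' := min_le_right (r / 2) (ε / 3)
  refine ⟨(w₁, w₂), ?_, max N₁ N₂, ?_⟩
  · rw [mem_ball, Prod.dist_eq, max_lt_iff]
    constructor <;> linarith
  · linarith [dist_triangle_right (g^[max N₁ N₂] w₁) (g^[max N₁ N₂] w₂) u]

theorem Distal.subsingleton_of_isMixing [CompleteSpace X] {f : X ≃ₜ X} (hd : Distal f)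
    (hmix : IsMixing (⇑f)) : Subsingleton X := by
  set P : ℕ → Set (X × X) :=
    fun k => {p | ∃ n : ℕ, dist ((⇑f)^[n] p.1) ((⇑f)^[n] p.2) < 1 / (k + 1)}
  have hP_open : ∀ k, IsOpen (P k) := fun k => by
    simp only [P, ofPred_exists]
    exact isOpen_iUnion fun n => isOpen_lt (((f.continuous.iterate n).comp continuous_fst).dist
      ((f.continuous.iterate n).comp continuous_snd)) continuous_const
  have hP_dense : Dense (⋂ k, P k) :=
    dense_iInter_of_isOpen_nat hP_open fun _ =>
      hmix.dense_setOf_dist_iterate_lt Nat.one_div_pos_of_nat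
  have hP_diag : (⋂ k, P k) ⊆ diagonal X := by
    rintro ⟨x, y⟩ hxy
    by_contra hne
    obtain ⟨c, hc, hsep⟩ := hd x y hne
    obtain ⟨k, hk⟩ := exists_nat_one_div_lt hc
    obtain ⟨n, hn⟩ := mem_iInter.mp hxy k
    have := hsep n
    rw [hpow_natCast_apply, hpow_natCast_apply] at this
    linarith
  have hdiag : diagonal X = univ := by
    rw [← isClosed_diagonal.closure_eq, (hP_dense.mono hP_diag).closure_eq]
  exact ⟨fun x y => (hdiag.symm ▸ mem_univ (x, y) : (x, y) ∈ diagonal X)⟩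

end Proximal

theorem stmt11 [CompactSpace X] [ConnectedSpace X] [Nontrivial X]
    (f : X ≃ₜ X) (h : Distal f) : ∀ x : X, ¬ ShadowablePoint f x := by
  intro x hx
  have hmix : IsMixing (⇑f) :=
    hx.isMixing (h.pointwiseRecurrent.chainMixing f.continuous)
  exact not_subsingleton X (h.subsingleton_of_isMixing hmix)
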